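/- Every Cauchy sequence {F_n^{σ_n}} in (D⁺, ρ⁺) has a limit F^σ ∈ D⁺, i.e. ρ⁺(F_n^{σ_n}, F^σ) → 0; moreover, if all F_n are continuous, then F can be taken continuous. Hence the quotient metric space D⁺/≡ (with ρ⁺(x,y)=0 declared as equality) is complete. -/

import Mathlib

open Filter

/-- A càdlàg function on `[0,1]`: right-continuous on `[0,1)`, left limits on `(0,1]`. -/
def Cadlag (f : unitInterval → ℝ) : Prop :=
  (∀ t : unitInterval, (t : ℝ) < 1 →
    Filter.Tendsto f (nhdsWithin t (Set.Ioi t)) (nhds (f t))) ∧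
  (∀ t : unitInterval, 0 < (t : ℝ) →
    ∃ l : ℝ, Filter.Tendsto f (nhdsWithin t (Set.Iio t)) (nhds l))

/-- Increasing homeomorphism of `[0,1]` onto itself. -/
def IsIncHomeo (γ : unitInterval → unitInterval) : Prop :=
  Continuous γ ∧ StrictMono γ ∧ Function.Bijective γ

/-- `Σ`: continuous non-decreasing surjections of `[0,1]` onto itself. -/
def InSigma (σ : unitInterval → unitInterval) : Prop :=
  Continuous σ ∧ Monotone σ ∧ Function.Surjective σ

/-- Skorokhod distance on functions on `[0,1]`. -/
noncomputable def skorokhodDist (f g : unitInterval → ℝ) : ℝ :=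
  sInf { c : ℝ | ∃ γ : unitInterval → unitInterval, IsIncHomeo γ ∧
    (⨆ s : unitInterval, |f s - g (γ s)|) + (⨆ s : unitInterval, |(s : ℝ) - (γ s : ℝ)|) = c }

/-- Extended Skorokhod semi-distance on turbofunctions. -/
noncomputable def rhoPlus (P Q : (unitInterval → ℝ) × (unitInterval → unitInterval)) : ℝ :=
  sInf { c : ℝ | ∃ γ : unitInterval → unitInterval, IsIncHomeo γ ∧
    (⨆ t : unitInterval, |P.1 (γ t) - Q.1 t|) +
    (⨆ t : unitInterval, |(P.2 (γ t) : ℝ) - (Q.2 t : ℝ)|) = c }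

instance : Fact ((0:ℝ) ≤ 1) := ⟨zero_le_one⟩

/-- Right-continuous inverse `σ⁻¹(s) = max {t : σ t ≤ s}` (as a supremum). -/
noncomputable def rcInv (σ : unitInterval → unitInterval) (s : unitInterval) : unitInterval :=
  sSup {t : unitInterval | σ t ≤ s}

/-!
Càdlàg functions are bounded, so a near-optimal time change in `rhoPlus` gives pointwise bounds,
and `rhoPlus` satisfies the triangle inequality. Along a subsequence with
`rhoPlus (P (k + 1)) (P k) < 2⁻ᵏ`, composing near-optimal time changes gives homeomorphisms `Λ k`
such that `(F_k ∘ Λ k, σ_k ∘ Λ k)` moves by less than `2⁻ᵏ` uniformly at each step. These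
reparametrised sequences converge uniformly; uniform limits of càdlàg (continuous) functions are
càdlàg (continuous), uniform limits of maps in `Σ` lie in `Σ`, and `Λ k` itself witnesses that the
subsequence converges in `rhoPlus`. The Cauchy property and the triangle inequality then give
convergence of the whole sequence.
-/

open Set Topology
local notation "I" => unitInterval

theorem TendstoUniformly.exists_tendsto {ι α β : Type*} [UniformSpace β] [CompleteSpace β]
    {F : ι → α → β} {f : α → β} {p : Filter ι} [p.NeBot] {l : Filter α}
    (h : TendstoUniformly F f p) (hF : ∀ i, ∃ L, Tendsto (F i) l (𝓝 L)) :
    ∃ L, Tendsto f l (𝓝 L) := by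
  obtain ⟨i⟩ : Nonempty ι := p.nonempty_of_neBot
  rcases l.eq_or_neBot with rfl | hl
  · exact (hF i).imp fun _ _ => tendsto_bot
  refine cauchy_map_iff_exists_tendsto.1 (cauchy_map_iff.2 ⟨hl, fun U hU => ?_⟩)
  obtain ⟨V, hV, hVsymm, hVU⟩ := comp_comp_symm_mem_uniformity_sets hU
  obtain ⟨j, hj⟩ := (h V hV).exists
  obtain ⟨L, hL⟩ := hF j
  refine mem_map.2 ?_
  filter_upwards [(cauchy_map_iff.1 hL.cauchy_map).2 hV] with q hq
  exact hVU ⟨_, ⟨_, hj q.1, hq⟩, hVsymm.symm _ _ (hj q.2)⟩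

theorem exists_tendstoUniformly_of_dist_le_geometric {α β : Type*} [PseudoMetricSpace β]
    [CompleteSpace β] {f : ℕ → α → β} {C r : ℝ} (hr₀ : 0 ≤ r) (hr : r < 1)
    (hf : ∀ n x, dist (f n x) (f (n + 1) x) ≤ C * r ^ n) :
    ∃ g, TendstoUniformly f g atTop := by
  choose g hg using fun x =>
    cauchySeq_tendsto_of_complete (cauchySeq_of_le_geometric r C hr (hf · x))
  have hbound : Tendsto (fun n => C * r ^ n / (1 - r)) atTop (𝓝 0) := by
    simpa using ((tendsto_pow_atTop_nhds_zero_of_lt_one hr₀ hr).const_mul C).div_const (1 - r)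
  refine ⟨g, Metric.tendstoUniformly_iff.2 fun ε hε => ?_⟩
  filter_upwards [hbound.eventually (gt_mem_nhds hε)] with n hn x
  rw [dist_comm]
  exact (dist_le_of_le_geometric_of_tendsto r C hr (hf · x) (hg x) n).trans_lt hn

theorem exists_strictMono_forall_lt_of_cauchy {d : ℕ → ℕ → ℝ}
    (hd : ∀ ε : ℝ, 0 < ε → ∃ N : ℕ, ∀ m ≥ N, ∀ n ≥ N, d m n < ε) {ε : ℕ → ℝ}
    (hε : ∀ k, 0 < ε k) : ∃ φ : ℕ → ℕ, StrictMono φ ∧ ∀ k, d (φ (k + 1)) (φ k) < ε k := by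
  have hev : ∀ k, ∀ᶠ j in atTop, ∀ m ≥ j, d m j < ε k := fun k => by
    obtain ⟨N, hN⟩ := hd _ (hε k)
    filter_upwards [eventually_ge_atTop N] with j hj m hm using hN m (hj.trans hm) j hj
  obtain ⟨φ, hφ, hφε⟩ := extraction_forall_of_eventually hev
  exact ⟨φ, hφ, fun k => hφε k _ (hφ k.lt_succ_self).le⟩

theorem tendsto_zero_of_cauchy_of_tendsto_comp {d : ℕ → ℕ → ℝ} {e : ℕ → ℝ} {φ : ℕ → ℕ}
    (hd : ∀ ε : ℝ, 0 < ε → ∃ N : ℕ, ∀ m ≥ N, ∀ n ≥ N, d m n < ε) (he₀ : ∀ n, 0 ≤ e n)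
    (htri : ∀ m n, e m ≤ d m n + e n) (hφ : StrictMono φ)
    (he : Tendsto (e ∘ φ) atTop (𝓝 0)) : Tendsto e atTop (𝓝 0) := by
  refine tendsto_order.2 ⟨fun a ha => .of_forall fun n => ha.trans_le (he₀ n), fun a ha => ?_⟩
  obtain ⟨N, hN⟩ := hd (a / 2) (half_pos ha)
  obtain ⟨k, hkN, hk⟩ := ((hφ.tendsto_atTop.eventually_ge_atTop N).and
    (he.eventually (gt_mem_nhds (half_pos ha)))).exists
  filter_upwards [eventually_ge_atTop N] with n hn
  linarith [htri n (φ k), hN n hn (φ k) hkN, show e (φ k) < a / 2 from hk]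

theorem cadlag_iff_forall_tendsto {f : I → ℝ} :
    Cadlag f ↔ (∀ t, Tendsto f (𝓝[>] t) (𝓝 (f t))) ∧ ∀ t, ∃ l, Tendsto f (𝓝[<] t) (𝓝 l) := by
  refine ⟨fun hf => ⟨fun t => ?_, fun t => ?_⟩, fun hf => ⟨fun t _ => hf.1 t, fun t _ => hf.2 t⟩⟩
  · rcases lt_or_ge (t : ℝ) 1 with ht | ht
    · exact hf.1 t ht
    · have : Ioi t = ∅ := Ioi_eq_empty_iff.2 fun s _ => Subtype.coe_le_coe.1 (s.2.2.trans ht)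
      simp [this]
  · rcases lt_or_ge 0 (t : ℝ) with ht | ht
    · exact hf.2 t ht
    · have : Iio t = ∅ := Iio_eq_empty_iff.2 fun s _ => Subtype.coe_le_coe.1 (ht.trans s.2.1)
      exact ⟨0, by simp [this]⟩

namespace Cadlag

variable {f : I → ℝ}

theorem exists_abs_le (hf : Cadlag f) : ∃ M, ∀ t, |f t| ≤ M := by
  rw [cadlag_iff_forall_tendsto] at hf
  have hloc : ∀ t, ∃ U ∈ 𝓝 t, Bornology.IsBounded (f '' U) := by
    intro t
    obtain ⟨l, hl⟩ := hf.2 t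
    have hr : Tendsto f (𝓝[≥] t) (𝓝 (f t)) := continuousWithinAt_Ioi_iff_Ici.1 (hf.1 t)
    refine ⟨f ⁻¹' Metric.ball l 1 ∪ f ⁻¹' Metric.ball (f t) 1, ?_, ?_⟩
    · rw [← nhdsLT_sup_nhdsGE]
      exact union_mem_sup (hl (Metric.ball_mem_nhds _ one_pos))
        (hr (Metric.ball_mem_nhds _ one_pos))
    · rw [image_union]
      exact (Metric.isBounded_ball.subset (image_preimage_subset _ _)).union
        (Metric.isBounded_ball.subset (image_preimage_subset _ _))
  obtain ⟨M, hM⟩ := isBounded_iff_forall_norm_le.1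
    (Bornology.isBounded_image_of_isLocallyBounded_of_isCompact isCompact_univ hloc)
  exact ⟨M, fun t => hM _ (mem_image_of_mem f (mem_univ t))⟩

theorem comp {γ : I → I} (hf : Cadlag f) (hγc : Continuous γ) (hγ : StrictMono γ) :
    Cadlag (f ∘ γ) := by
  rw [cadlag_iff_forall_tendsto] at hf ⊢
  have hγt : ∀ t, Tendsto γ (𝓝[>] t) (𝓝[>] (γ t)) ∧ Tendsto γ (𝓝[<] t) (𝓝[<] (γ t)) :=
    fun t => ⟨hγc.continuousWithinAt.tendsto_nhdsWithin fun _ hs => hγ hs,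
      hγc.continuousWithinAt.tendsto_nhdsWithin fun _ hs => hγ hs⟩
  refine ⟨fun t => (hf.1 (γ t)).comp (hγt t).1, fun t => ?_⟩
  obtain ⟨l, hl⟩ := hf.2 (γ t)
  exact ⟨l, hl.comp (hγt t).2⟩

theorem of_tendstoUniformly {ι : Type*} {p : Filter ι} [p.NeBot] {F : ι → I → ℝ}
    (hF : ∀ i, Cadlag (F i)) (h : TendstoUniformly F f p) : Cadlag f := by
  simp only [cadlag_iff_forall_tendsto] at hF ⊢
  exact ⟨fun t => h.tendsto_of_eventually_tendsto (.of_forall fun i => (hF i).1 t)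
    (h.tendsto_at t), fun t => h.exists_tendsto fun i => (hF i).2 t⟩

end Cadlag

theorem IsIncHomeo.id : IsIncHomeo id :=
  ⟨continuous_id, strictMono_id, Function.bijective_id⟩

theorem IsIncHomeo.comp {γ δ : I → I} (hγ : IsIncHomeo γ) (hδ : IsIncHomeo δ) :
    IsIncHomeo (γ ∘ δ) :=
  ⟨hγ.1.comp hδ.1, hγ.2.1.comp hδ.2.1, hγ.2.2.comp hδ.2.2⟩

namespace InSigma

variable {σ : I → I}

theorem map_zero (hσ : InSigma σ) : σ 0 = 0 := by
  obtain ⟨s, hs⟩ := hσ.2.2 0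
  exact le_bot_iff.1 ((hσ.2.1 bot_le).trans_eq hs)

theorem map_one (hσ : InSigma σ) : σ 1 = 1 := by
  obtain ⟨s, hs⟩ := hσ.2.2 1
  exact top_le_iff.1 (hs.symm.trans_le (hσ.2.1 le_top))

theorem comp {γ : I → I} (hσ : InSigma σ) (hγ : IsIncHomeo γ) : InSigma (σ ∘ γ) :=
  ⟨hσ.1.comp hγ.1, hσ.2.1.comp hγ.2.1.monotone, hσ.2.2.comp hγ.2.2.2⟩

theorem of_tendstoUniformly {ι : Type*} {p : Filter ι} [p.NeBot] {S : ι → I → I}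
    (hS : ∀ i, InSigma (S i)) (h : TendstoUniformly S σ p) : InSigma σ := by
  have hc : Continuous σ := h.continuous (.of_forall fun i => (hS i).1)
  have h0 : σ 0 = 0 := tendsto_nhds_unique (h.tendsto_at 0)
    ((tendsto_congr fun i => (hS i).map_zero).2 tendsto_const_nhds)
  have h1 : σ 1 = 1 := tendsto_nhds_unique (h.tendsto_at 1)
    ((tendsto_congr fun i => (hS i).map_one).2 tendsto_const_nhds)
  refine ⟨hc, fun a b hab => le_of_tendsto_of_tendsto' (h.tendsto_at a) (h.tendsto_at b)
    fun i => (hS i).2.1 hab, fun y => intermediate_value_univ 0 1 hc ?_⟩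
  rw [h0, h1]
  exact ⟨bot_le, le_top⟩

end InSigma

section rhoPlus

variable {P Q R : (I → ℝ) × (I → I)}

theorem rhoPlus_nonneg (P Q : (I → ℝ) × (I → I)) : 0 ≤ rhoPlus P Q :=
  Real.sInf_nonneg fun _ ⟨_, _, hc⟩ => hc ▸
    add_nonneg (Real.iSup_nonneg fun _ => abs_nonneg _) (Real.iSup_nonneg fun _ => abs_nonneg _)

theorem rhoPlus_le_of_forall_le {γ : I → I} (hγ : IsIncHomeo γ) {a b : ℝ}
    (ha : ∀ t, |P.1 (γ t) - Q.1 t| ≤ a) (hb : ∀ t, |(P.2 (γ t) : ℝ) - Q.2 t| ≤ b) :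
    rhoPlus P Q ≤ a + b := by
  have hbdd : BddBelow {c : ℝ | ∃ γ : I → I, IsIncHomeo γ ∧
      (⨆ t, |P.1 (γ t) - Q.1 t|) + (⨆ t, |(P.2 (γ t) : ℝ) - Q.2 t|) = c} :=
    ⟨0, fun _ ⟨_, _, hc⟩ => hc ▸
      add_nonneg (Real.iSup_nonneg fun _ => abs_nonneg _) (Real.iSup_nonneg fun _ => abs_nonneg _)⟩
  exact (csInf_le hbdd ⟨γ, hγ, rfl⟩).trans (add_le_add (ciSup_le ha) (ciSup_le hb))

/-- The boundedness assumptions make the two suprema in `rhoPlus` genuine suprema, not the junk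
value `0` that `⨆` takes on unbounded families. -/
theorem exists_isIncHomeo_of_rhoPlus_lt {ε : ℝ} (hP : ∃ M, ∀ t, |P.1 t| ≤ M)
    (hQ : ∃ M, ∀ t, |Q.1 t| ≤ M) (h : rhoPlus P Q < ε) :
    ∃ γ, IsIncHomeo γ ∧ ∃ a b, a + b < ε ∧
      (∀ t, |P.1 (γ t) - Q.1 t| ≤ a) ∧ ∀ t, |(P.2 (γ t) : ℝ) - Q.2 t| ≤ b := by
  obtain ⟨M₁, hM₁⟩ := hP
  obtain ⟨M₂, hM₂⟩ := hQ
  obtain ⟨_, ⟨γ, hγ, rfl⟩, hlt⟩ :=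
    exists_lt_of_csInf_lt (by exact ⟨_, id, IsIncHomeo.id, rfl⟩) h
  have hbdd₁ : BddAbove (range fun t => |P.1 (γ t) - Q.1 t|) := by
    refine ⟨M₁ + M₂, ?_⟩
    rintro _ ⟨s, rfl⟩
    exact (abs_sub _ _).trans (add_le_add (hM₁ _) (hM₂ _))
  have hbdd₂ : BddAbove (range fun t => |(P.2 (γ t) : ℝ) - Q.2 t|) := by
    refine ⟨1, ?_⟩
    rintro _ ⟨s, rfl⟩
    exact abs_sub_le_of_nonneg_of_le (P.2 (γ s)).2.1 (P.2 (γ s)).2.2 (Q.2 s).2.1 (Q.2 s).2.2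
  exact ⟨γ, hγ, _, _, hlt, le_ciSup hbdd₁, le_ciSup hbdd₂⟩

theorem rhoPlus_triangle (hP : ∃ M, ∀ t, |P.1 t| ≤ M) (hQ : ∃ M, ∀ t, |Q.1 t| ≤ M)
    (hR : ∃ M, ∀ t, |R.1 t| ≤ M) : rhoPlus P R ≤ rhoPlus P Q + rhoPlus Q R := by
  refine le_of_forall_pos_lt_add fun ε hε => ?_
  obtain ⟨γ₁, hγ₁, a₁, b₁, hab₁, ha₁, hb₁⟩ :=
    exists_isIncHomeo_of_rhoPlus_lt hP hQ (lt_add_of_pos_right (rhoPlus P Q) (half_pos hε))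
  obtain ⟨γ₂, hγ₂, a₂, b₂, hab₂, ha₂, hb₂⟩ :=
    exists_isIncHomeo_of_rhoPlus_lt hQ hR (lt_add_of_pos_right (rhoPlus Q R) (half_pos hε))
  have hle : rhoPlus P R ≤ (a₁ + a₂) + (b₁ + b₂) :=
    rhoPlus_le_of_forall_le (hγ₁.comp hγ₂)
      (fun t => (abs_sub_le _ (Q.1 (γ₂ t)) _).trans (add_le_add (ha₁ _) (ha₂ t)))
      (fun t => (abs_sub_le _ (Q.2 (γ₂ t) : ℝ) _).trans (add_le_add (hb₁ _) (hb₂ t)))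
  linarith

end rhoPlus

theorem tendsto_rhoPlus_of_tendstoUniformly {ι : Type*} {p : Filter ι}
    {P : ι → (I → ℝ) × (I → I)} {Λ : ι → I → I} {F : I → ℝ} {σ : I → I}
    (hΛ : ∀ i, IsIncHomeo (Λ i)) (hF : TendstoUniformly (fun i => (P i).1 ∘ Λ i) F p)
    (hσ : TendstoUniformly (fun i => (P i).2 ∘ Λ i) σ p) :
    Tendsto (fun i => rhoPlus (P i) (F, σ)) p (𝓝 0) := by
  rw [Metric.tendstoUniformly_iff] at hF hσ
  refine tendsto_order.2 ⟨fun a ha => .of_forall fun i => ha.trans_le (rhoPlus_nonneg _ _),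
    fun a ha => ?_⟩
  filter_upwards [hF (a / 3) (by positivity), hσ (a / 3) (by positivity)] with i hFi hσi
  have hle : rhoPlus (P i) (F, σ) ≤ a / 3 + a / 3 :=
    rhoPlus_le_of_forall_le (hΛ i) (fun t => (abs_sub_comm _ _).trans_le (hFi t).le)
      (fun t => (abs_sub_comm _ _).trans_le (hσi t).le)
  linarith

/-- Comparing `P (k + 1)` with `P k` (rather than the reverse) lets the reparametrisations be built
forwards, `Λ (k + 1) = γ k ∘ Λ k`, without inverting any homeomorphism. -/
theorem exists_isIncHomeo_chain {P : ℕ → (I → ℝ) × (I → I)} {ε : ℕ → ℝ}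
    (hP : ∀ k, ∃ M, ∀ t, |(P k).1 t| ≤ M) (h : ∀ k, rhoPlus (P (k + 1)) (P k) < ε k) :
    ∃ Λ : ℕ → I → I, (∀ k, IsIncHomeo (Λ k)) ∧ ∀ k t,
      dist ((P k).1 (Λ k t)) ((P (k + 1)).1 (Λ (k + 1) t)) ≤ ε k ∧
      dist ((P k).2 (Λ k t)) ((P (k + 1)).2 (Λ (k + 1) t)) ≤ ε k := by
  choose γ hγ a b hab ha hb using fun k =>
    exists_isIncHomeo_of_rhoPlus_lt (hP (k + 1)) (hP k) (h k)
  let Λ : ℕ → I → I := fun k => Nat.rec id (fun k Λk => γ k ∘ Λk) k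
  refine ⟨Λ, fun k => ?_, fun k t => ?_⟩
  · induction k with
    | zero => exact IsIncHomeo.id
    | succ k ih => exact (hγ k).comp ih
  · have ha' : |(P (k + 1)).1 (Λ (k + 1) t) - (P k).1 (Λ k t)| ≤ a k := ha k (Λ k t)
    have hb' : |((P (k + 1)).2 (Λ (k + 1) t) : ℝ) - (P k).2 (Λ k t)| ≤ b k := hb k (Λ k t)
    have hsum := hab k
    rw [dist_comm, Real.dist_eq, dist_comm, Subtype.dist_eq, Real.dist_eq]
    constructor <;> linarith [(abs_nonneg _).trans ha', (abs_nonneg _).trans hb']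

theorem DPlus_complete (Fn : ℕ → unitInterval → ℝ) (σn : ℕ → unitInterval → unitInterval)
    (hFn : ∀ n, Cadlag (Fn n)) (hσn : ∀ n, InSigma (σn n))
    (hCauchy : ∀ ε : ℝ, 0 < ε → ∃ N : ℕ, ∀ m ≥ N, ∀ n ≥ N,
      rhoPlus (Fn m, σn m) (Fn n, σn n) < ε) :
    ∃ F : unitInterval → ℝ, ∃ σ₀ : unitInterval → unitInterval,
      Cadlag F ∧ InSigma σ₀ ∧
      Filter.Tendsto (fun n => rhoPlus (Fn n, σn n) (F, σ₀)) Filter.atTop (nhds 0) ∧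
      ((∀ n, Continuous (Fn n)) → Continuous F) := by
  have hbdd : ∀ n, ∃ M, ∀ t, |Fn n t| ≤ M := fun n => (hFn n).exists_abs_le
  obtain ⟨φ, hφ, hfast⟩ :=
    exists_strictMono_forall_lt_of_cauchy hCauchy fun k => pow_pos (one_half_pos (α := ℝ)) k
  obtain ⟨Λ, hΛ, hdist⟩ := exists_isIncHomeo_chain (P := fun k => (Fn (φ k), σn (φ k)))
    (fun k => hbdd (φ k)) hfast
  obtain ⟨F, hF⟩ := exists_tendstoUniformly_of_dist_le_geometric (C := 1) one_half_pos.le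
    one_half_lt_one fun k t => by simpa using (hdist k t).1
  obtain ⟨σ₀, hσ₀⟩ := exists_tendstoUniformly_of_dist_le_geometric (C := 1) one_half_pos.le
    one_half_lt_one fun k t => by simpa using (hdist k t).2
  have hFcad : Cadlag F :=
    Cadlag.of_tendstoUniformly (fun k => (hFn (φ k)).comp (hΛ k).1 (hΛ k).2.1) hF
  refine ⟨F, σ₀, hFcad, InSigma.of_tendstoUniformly (fun k => (hσn (φ k)).comp (hΛ k)) hσ₀,
    ?_, fun hc => hF.continuous (.of_forall fun k => (hc (φ k)).comp (hΛ k).1)⟩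
  refine tendsto_zero_of_cauchy_of_tendsto_comp hCauchy (fun n => rhoPlus_nonneg _ _)
    (fun m n => rhoPlus_triangle (hbdd m) (hbdd n) hFcad.exists_abs_le) hφ ?_
  exact tendsto_rhoPlus_of_tendstoUniformly hΛ hF hσ₀
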